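/- Let N be a positive integer and D_0 = y(1+y)d²/dy² + [1-(N-1)y]d/dy. The unique formal power series Q_0 with D_0 Q_0 = 1 and Q_0(0) = 0 is a polynomial of degree exactly N whose y^N coefficient equals 1/N². -/

import Mathlib

/-!
On coefficients, `D_m` acts by `q ↦ ((j + 1)² q_{j+1} + (j(j - N) + m(N - m)) q_j)_j`, so a series is
determined by its image and its constant term. The solution is explicit:
`Q_0 = ∑_{j ≥ 1} C(N, j) y^j / (N j)`, i.e. `Q_0' = ((1 + y)^N - 1) / (N y)`; the recursion for its
coefficients is `(j + 1) C(N, j + 1) = (N - j) C(N, j)`.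
-/

open PowerSeries

/-- The differential operator `D_m = y(1+y) d²/dy² + [1-(N-1)y] d/dy + m(N-m)`
acting on formal power series over `ℚ`. -/
noncomputable def Dop (N m : ℕ) (u : PowerSeries ℚ) : PowerSeries ℚ :=
  (PowerSeries.X * (1 + PowerSeries.X)) *
      (PowerSeries.derivative ℚ (PowerSeries.derivative ℚ u))
    + (1 - PowerSeries.C ((N : ℚ) - 1) * PowerSeries.X) * (PowerSeries.derivative ℚ u)
    + PowerSeries.C ((m : ℚ) * ((N : ℚ) - (m : ℚ))) * u

theorem Nat.cast_choose_succ_right_eq {R : Type*} [Ring R] (n k : ℕ) :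
    (n.choose (k + 1) : R) * (k + 1) = n.choose k * (n - k) := by
  rcases le_or_gt k n with hk | hk
  · have h := congrArg (Nat.cast : ℕ → R) (Nat.choose_succ_right_eq n k)
    push_cast [Nat.cast_sub hk] at h
    exact h
  · simp [Nat.choose_eq_zero_of_lt hk, Nat.choose_eq_zero_of_lt (Nat.lt_succ_of_lt hk)]

theorem PowerSeries.coeff_X_mul_derivative {R : Type*} [CommSemiring R] (f : R⟦X⟧) (n : ℕ) :
    coeff n (X * d⁄dX R f) = n * coeff n f := by
  cases n with
  | zero => simp
  | succ n => rw [coeff_succ_X_mul, coeff_derivative, mul_comm]; push_cast; rfl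

theorem coeff_Dop (N m : ℕ) (Q : ℚ⟦X⟧) (j : ℕ) :
    coeff j (Dop N m Q) =
      (j + 1) ^ 2 * coeff (j + 1) Q + (j * (j - N) + m * (N - m)) * coeff j Q := by
  -- `X² Q'' = X (X Q')' - X Q'` brings every term into the shape of `coeff_X_mul_derivative`.
  have h : Dop N m Q = X * d⁄dX ℚ (d⁄dX ℚ Q) + X * d⁄dX ℚ (X * d⁄dX ℚ Q) + d⁄dX ℚ Q
      - C (N : ℚ) * (X * d⁄dX ℚ Q) + C ((m : ℚ) * (N - m)) * Q := by
    rw [Dop, Derivation.leibniz, derivative_X, map_sub, map_natCast]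
    simp only [smul_eq_mul, map_one]
    ring
  rw [h]
  simp only [map_add, map_sub, coeff_C_mul, coeff_X_mul_derivative, coeff_derivative]
  ring

theorem eq_of_Dop_eq {N m : ℕ} {P Q : ℚ⟦X⟧} (h : Dop N m P = Dop N m Q)
    (h0 : constantCoeff P = constantCoeff Q) : P = Q := by
  ext j
  induction j with
  | zero => simpa using h0
  | succ j ih =>
    have hj := congrArg (coeff j) h
    rw [coeff_Dop, coeff_Dop, ih] at hj
    exact mul_left_cancel₀ (by positivity) (add_right_cancel hj)

/-- At `j = 0` the denominator vanishes, and `x / 0 = 0` gives the constant coefficient `0`. -/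
noncomputable def Q0 (N : ℕ) : ℚ⟦X⟧ := mk fun j => (N.choose j : ℚ) / (N * j)

theorem constantCoeff_Q0 (N : ℕ) : constantCoeff (Q0 N) = 0 := by
  simp [Q0, ← coeff_zero_eq_constantCoeff_apply]

theorem Dop_Q0 {N : ℕ} (hN : 0 < N) : Dop N 0 (Q0 N) = 1 := by
  have hN' : (N : ℚ) ≠ 0 := by positivity
  ext j
  rw [coeff_Dop, coeff_one, Q0, coeff_mk, coeff_mk]
  rcases Nat.eq_zero_or_pos j with rfl | hj
  · simp [hN']
  · have hj' : (j : ℚ) ≠ 0 := by positivity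
    rw [if_neg hj.ne']
    push_cast [zero_mul, add_zero]
    field_simp
    linear_combination Nat.cast_choose_succ_right_eq (R := ℚ) N j

/-- The unique formal power series `Q_0` with `D_0 Q_0 = 1` and `Q_0(0) = 0` is a polynomial
of degree exactly `N`, with `y^N` coefficient `1/N²`. -/
theorem Q0_coeff (N : ℕ) (hN : 0 < N) :
    (∃! Q : PowerSeries ℚ, Dop N 0 Q = 1 ∧ PowerSeries.constantCoeff Q = 0) ∧
      ∀ Q : PowerSeries ℚ, Dop N 0 Q = 1 → PowerSeries.constantCoeff Q = 0 →
        (∀ j : ℕ, N < j → PowerSeries.coeff j Q = 0) ∧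
          PowerSeries.coeff N Q = 1 / (N : ℚ)^2 := by
  have eq_Q0 : ∀ Q, Dop N 0 Q = 1 → constantCoeff Q = 0 → Q = Q0 N := fun Q hQ hQc =>
    eq_of_Dop_eq (hQ.trans (Dop_Q0 hN).symm) (hQc.trans (constantCoeff_Q0 N).symm)
  refine ⟨⟨Q0 N, ⟨Dop_Q0 hN, constantCoeff_Q0 N⟩, fun Q ⟨hQ, hQc⟩ => eq_Q0 Q hQ hQc⟩,
    fun Q hQ hQc => ?_⟩
  rw [eq_Q0 Q hQ hQc]
  refine ⟨fun j hj => ?_, ?_⟩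
  · simp [Q0, Nat.choose_eq_zero_of_lt hj]
  · simp [Q0, sq]
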